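/- Coparameterized Bayesian updates compose optically (almost-sure uniqueness): in the setting where γ : A → Dist(M × B), δ : B → Dist(N × C), π is a distribution on A, ρ is a Bayesian inversion of γ with respect to π, and δ† is a Bayesian inversion of δ with respect to the pushforward p_B(b) = ∑_{a,m} π a · γ a (m,b), if τ : C → Dist(A × (M × B × N)) is any Bayesian inversion of the copy-composite (δ ∘² γ) a ((m,b,n),c) = γ a (m,b) · δ b (n,c) with respect to π, then for every c with p_C(c) = ∑_{a,m,b,n} π a · γ a (m,b) · δ b (n,c) > 0 and for all a, m, b, n, one has τ c (a,(m,b,n)) = δ† c (b,n) · ρ b (a,m); i.e. any Bayesian inversion of the copy-composite agrees with the copy-composite of the inversions at every observation of nonzero probability. -/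
import Mathlib


open scoped BigOperators

/-- The pushforward `p_B` of a prior `π` on `A` along a coparameterized channel
`γ : A → Dist (M × B)`, discarding the coparameter. -/
noncomputable def pushB {A B M : Type*} [Fintype A] [Fintype M]
    (π : A → ℝ) (γ : A → M × B → ℝ) (b : B) : ℝ :=
  ∑ a, ∑ m, π a * γ a (m, b)

/-- The pushforward `p_C` of the prior along the (discarded) copy-composite:
`p_C c = ∑ a m b n, π a * γ a (m,b) * δ b (n,c)`. -/
noncomputable def pushC {A B C M N : Type*} [Fintype A] [Fintype B] [Fintype M] [Fintype N]
    (π : A → ℝ) (γ : A → M × B → ℝ) (δ : B → N × C → ℝ) (c : C) : ℝ :=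
  ∑ a, ∑ m, ∑ b, ∑ n, π a * γ a (m, b) * δ b (n, c)

/-- **Coparameterized Bayesian updates compose optically (almost-sure uniqueness).**
If `ρ` inverts `γ` with respect to `π`, `δ†` inverts `δ` with respect to `p_B`, and
`τ` is any Bayesian inversion of the copy-composite `δ ∘² γ` with respect to `π`,
then at every observation `c` of nonzero probability, `τ` agrees with the
copy-composite of the inversions: `τ c (a,(m,b,n)) = δ† c (b,n) * ρ b (a,m)`. -/
theorem coparameterized_bayes_almost_surely_unique
    {A B C M N : Type*} [Fintype A] [Fintype B] [Fintype C] [Fintype M] [Fintype N]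
    (π : A → ℝ) (γ : A → M × B → ℝ) (δ : B → N × C → ℝ)
    (ρ : B → A × M → ℝ) (δd : C → B × N → ℝ)
    (τ : C → A × (M × B × N) → ℝ)
    (hπ₀ : ∀ a, 0 ≤ π a) (hπ₁ : ∑ a, π a = 1)
    (hγ₀ : ∀ a mb, 0 ≤ γ a mb) (hγ₁ : ∀ a, ∑ mb, γ a mb = 1)
    (hδ₀ : ∀ b nc, 0 ≤ δ b nc) (hδ₁ : ∀ b, ∑ nc, δ b nc = 1)
    (hρ₀ : ∀ b am, 0 ≤ ρ b am) (hρ₁ : ∀ b, ∑ am, ρ b am = 1)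
    (hδd₀ : ∀ c bn, 0 ≤ δd c bn) (hδd₁ : ∀ c, ∑ bn, δd c bn = 1)
    (hτ₀ : ∀ c k, 0 ≤ τ c k) (hτ₁ : ∀ c, ∑ k, τ c k = 1)
    (hρ : ∀ (a : A) (m : M) (b : B),
      π a * γ a (m, b) = pushB π γ b * ρ b (a, m))
    (hδd : ∀ (b : B) (n : N) (c : C),
      pushB π γ b * δ b (n, c) = pushC π γ δ c * δd c (b, n))
    (hτ : ∀ (a : A) (m : M) (b : B) (n : N) (c : C),
      π a * (γ a (m, b) * δ b (n, c)) = pushC π γ δ c * τ c (a, (m, b, n))) :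
    ∀ c : C, 0 < pushC π γ δ c →
      ∀ (a : A) (m : M) (b : B) (n : N),
        τ c (a, (m, b, n)) = δd c (b, n) * ρ b (a, m) := by
  intro c hc a m b n
  have key : pushC π γ δ c * τ c (a, (m, b, n))
      = pushC π γ δ c * (δd c (b, n) * ρ b (a, m)) := by
    calc pushC π γ δ c * τ c (a, (m, b, n))
        = π a * (γ a (m, b) * δ b (n, c)) := (hτ a m b n c).symm
      _ = (π a * γ a (m, b)) * δ b (n, c) := by ring
      _ = (pushB π γ b * ρ b (a, m)) * δ b (n, c) := by rw [hρ]
      _ = (pushB π γ b * δ b (n, c)) * ρ b (a, m) := by ring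
      _ = (pushC π γ δ c * δd c (b, n)) * ρ b (a, m) := by rw [hδd]
      _ = pushC π γ δ c * (δd c (b, n) * ρ b (a, m)) := by ring
  exact mul_left_cancel₀ (ne_of_gt hc) key
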